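/- Let Ω be a properly convex domain, and let {x_n}, {y_n} be sequences in Ω with limits x and y in the closure of Ω. If sup_n d_Ω(x_n, y_n) < ∞, then y ∈ F_Ω(x), i.e., y lies in the face of x. -/

import Mathlib

/-!
Write `s, t > 0` for the parameters at which the rays from `p` away from `q` and from `q` away
from `p` leave `Ω`. Then `d_Ω(p, q) = log ((1 + s)(1 + t) / (s t))`, so a bound `d_Ω ≤ M` forces
`s, t ≥ e^{-M}`, while boundedness of `Ω` gives `s, t ≤ diam Ω / ‖p - q‖`. Along a subsequence
these parameters converge to `s, t > 0`, so `a = x + s (x - y)` and `b = y + t (y - x)` lie in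
the closure of `Ω`; both `x` and `y` are interior points of the segment `[a, b]`.
-/

open Set Filter Classical

abbrev Ed (d : ℕ) := EuclideanSpace ℝ (Fin d)

/-- A properly convex domain in an affine chart: a bounded open convex nonempty set. -/
def IsProperlyConvex {d : ℕ} (Ω : Set (Ed d)) : Prop :=
  IsOpen Ω ∧ Convex ℝ Ω ∧ Bornology.IsBounded Ω ∧ Ω.Nonempty

/-- The face of `x`: `x` together with all points `q` such that some segment inside the
closure of `Ω` contains both `x` and `q` in its interior. -/
def face {d : ℕ} (Ω : Set (Ed d)) (x : Ed d) : Set (Ed d) :=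
  insert x {q | ∃ u v : Ed d, segment ℝ u v ⊆ closure Ω ∧
    x ∈ openSegment ℝ u v ∧ q ∈ openSegment ℝ u v}

/-- The Hilbert metric on a bounded open convex set, defined via the cross-ratio of
`x`, `y` and the two intersection points of the line through `x, y` with the boundary. -/
noncomputable def hilbertDist {d : ℕ} (Ω : Set (Ed d)) (x y : Ed d) : ℝ :=
  if x = y then 0 else
    let a := x + (sSup {t : ℝ | x + t • (x - y) ∈ Ω}) • (x - y)
    let b := y + (sSup {t : ℝ | y + t • (y - x) ∈ Ω}) • (y - x)
    Real.log ((‖b - x‖ * ‖y - a‖) / (‖b - y‖ * ‖x - a‖))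

section ExitTime

variable {E : Type*} [NormedAddCommGroup E] [NormedSpace ℝ E]

noncomputable def exitTime (Ω : Set E) (p q : E) : ℝ :=
  sSup {t : ℝ | p + t • (p - q) ∈ Ω}

variable {Ω : Set E} {p q : E}

lemma mul_norm_le_diam_of_add_smul_mem (hΩ : Bornology.IsBounded Ω) (hp : p ∈ Ω) {t : ℝ}
    (ht : p + t • (p - q) ∈ Ω) : t * ‖p - q‖ ≤ Metric.diam Ω :=
  calc t * ‖p - q‖ ≤ ‖t • (p - q)‖ := by
        rw [norm_smul, Real.norm_eq_abs]; gcongr; exact le_abs_self t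
    _ = dist (p + t • (p - q)) p := by rw [dist_eq_norm, add_sub_cancel_left]
    _ ≤ Metric.diam Ω := Metric.dist_le_diam_of_mem hΩ ht hp

lemma bddAbove_exitSet (hΩ : Bornology.IsBounded Ω) (hp : p ∈ Ω) (hpq : p ≠ q) :
    BddAbove {t : ℝ | p + t • (p - q) ∈ Ω} :=
  ⟨Metric.diam Ω / ‖p - q‖, fun _ ht =>
    (le_div_iff₀ (norm_sub_pos_iff.2 hpq)).2 (mul_norm_le_diam_of_add_smul_mem hΩ hp ht)⟩

lemma exitTime_pos (hΩo : IsOpen Ω) (hΩ : Bornology.IsBounded Ω) (hp : p ∈ Ω) (hpq : p ≠ q) :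
    0 < exitTime Ω p q := by
  obtain ⟨ε, hε, hball⟩ := Metric.isOpen_iff.mp hΩo p hp
  have hr : 0 < ‖p - q‖ := norm_sub_pos_iff.2 hpq
  have hmem : p + (ε / (2 * ‖p - q‖)) • (p - q) ∈ Ω := by
    apply hball
    rw [Metric.mem_ball, dist_eq_norm, add_sub_cancel_left, norm_smul, Real.norm_eq_abs,
      abs_of_pos (by positivity), div_mul_eq_mul_div, div_lt_iff₀ (by positivity)]
    nlinarith
  exact (by positivity : (0 : ℝ) < ε / (2 * ‖p - q‖)).trans_le
    (le_csSup (bddAbove_exitSet hΩ hp hpq) hmem)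

lemma exitTime_le_diam_div (hΩ : Bornology.IsBounded Ω) (hp : p ∈ Ω) (hpq : p ≠ q) :
    exitTime Ω p q ≤ Metric.diam Ω / ‖p - q‖ :=
  csSup_le ⟨0, by simpa using hp⟩ fun _ ht =>
    (le_div_iff₀ (norm_sub_pos_iff.2 hpq)).2 (mul_norm_le_diam_of_add_smul_mem hΩ hp ht)

lemma add_exitTime_smul_mem_closure (hΩ : Bornology.IsBounded Ω) (hp : p ∈ Ω) (hpq : p ≠ q) :
    p + exitTime Ω p q • (p - q) ∈ closure Ω :=
  map_mem_closure (f := fun t : ℝ => p + t • (p - q)) (by fun_prop)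
    (csSup_mem_closure ⟨0, by simpa using hp⟩ (bddAbove_exitSet hΩ hp hpq)) fun _ ht => ht

lemma add_smul_mem_closure_of_tendsto {ι : Type*} {l : Filter ι} [l.NeBot] {ps qs : ι → E}
    {x y : E} {s : ℝ} (hΩ : Bornology.IsBounded Ω) (hps : ∀ i, ps i ∈ Ω)
    (hne : ∀ᶠ i in l, ps i ≠ qs i) (hx : Tendsto ps l (nhds x)) (hy : Tendsto qs l (nhds y))
    (hs : Tendsto (fun i => exitTime Ω (ps i) (qs i)) l (nhds s)) :
    x + s • (x - y) ∈ closure Ω :=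
  isClosed_closure.mem_of_tendsto (hx.add (hs.smul (hx.sub hy)))
    (hne.mono fun i hi => add_exitTime_smul_mem_closure hΩ (hps i) hi)

lemma mem_openSegment_add_smul_sub {x y : E} {s t : ℝ} (hs : 0 < s) (ht : 0 < t) :
    x ∈ openSegment ℝ (x + s • (x - y)) (y + t • (y - x)) := by
  have hD : 0 < 1 + s + t := by positivity
  refine ⟨(1 + t) / (1 + s + t), s / (1 + s + t), by positivity, by positivity, ?_, ?_⟩
  · field_simp; ring
  · match_scalars <;> field_simp <;> ring

end ExitTime

lemma exp_neg_le_of_log_le {s t M : ℝ} (hs : 0 < s) (ht : 0 < t)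
    (h : Real.log ((1 + t) * (1 + s) / (t * s)) ≤ M) : Real.exp (-M) ≤ s := by
  have h1 : 1 / s ≤ (1 + t) * (1 + s) / (t * s) := by
    rw [div_le_div_iff₀ hs (by positivity)]; nlinarith [mul_pos hs ht, mul_pos (mul_pos hs ht) hs]
  have h2 : 1 / s ≤ Real.exp M :=
    h1.trans ((Real.log_le_iff_le_exp (by positivity)).1 h)
  rw [Real.exp_neg, inv_le_comm₀ (Real.exp_pos M) hs]
  simpa using h2

section Hilbert

variable {d : ℕ} {Ω : Set (Ed d)} {p q : Ed d}

lemma hilbertDist_eq_log_exitTime (hpq : p ≠ q) (hs : 0 < exitTime Ω p q)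
    (ht : 0 < exitTime Ω q p) :
    hilbertDist Ω p q = Real.log ((1 + exitTime Ω q p) * (1 + exitTime Ω p q) /
      (exitTime Ω q p * exitTime Ω p q)) := by
  set s := exitTime Ω p q
  set t := exitTime Ω q p
  have hr : 0 < ‖q - p‖ := norm_sub_pos_iff.2 hpq.symm
  have e1 : q + t • (q - p) - p = (1 + t) • (q - p) := by module
  have e2 : q - (p + s • (p - q)) = (1 + s) • (q - p) := by module
  have e3 : q + t • (q - p) - q = t • (q - p) := by module
  have e4 : p - (p + s • (p - q)) = s • (q - p) := by module
  rw [hilbertDist, if_neg hpq]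
  change Real.log (‖q + t • (q - p) - p‖ * ‖q - (p + s • (p - q))‖ /
    (‖q + t • (q - p) - q‖ * ‖p - (p + s • (p - q))‖)) = _
  simp only [e1, e2, e3, e4, norm_smul, Real.norm_eq_abs, abs_of_pos hs, abs_of_pos ht,
    abs_of_pos (by linarith : 0 < 1 + s), abs_of_pos (by linarith : 0 < 1 + t)]
  congr 1
  field_simp

lemma exitTime_mem_Icc (hΩo : IsOpen Ω) (hΩ : Bornology.IsBounded Ω) (hp : p ∈ Ω) (hq : q ∈ Ω)
    {r M : ℝ} (hr : 0 < r) (hpq : r ≤ ‖p - q‖) (h : hilbertDist Ω p q ≤ M) :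
    exitTime Ω p q ∈ Icc (Real.exp (-M)) (Metric.diam Ω / r) ∧
      exitTime Ω q p ∈ Icc (Real.exp (-M)) (Metric.diam Ω / r) := by
  have hne : p ≠ q := fun h => by simp [h] at hpq; linarith
  have hs := exitTime_pos hΩo hΩ hp hne
  have ht := exitTime_pos hΩo hΩ hq hne.symm
  rw [hilbertDist_eq_log_exitTime hne hs ht] at h
  have hdiv : ∀ {a : ℝ}, r ≤ a → Metric.diam Ω / a ≤ Metric.diam Ω / r := fun ha =>
    div_le_div_of_nonneg_left Metric.diam_nonneg hr ha
  refine ⟨⟨exp_neg_le_of_log_le hs ht h, (exitTime_le_diam_div hΩ hp hne).trans (hdiv hpq)⟩,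
    ⟨exp_neg_le_of_log_le ht hs (by rwa [mul_comm (1 + _), mul_comm (exitTime Ω p q)]), ?_⟩⟩
  exact (exitTime_le_diam_div hΩ hq hne.symm).trans (hdiv (norm_sub_rev p q ▸ hpq))

lemma mem_face_of_add_smul_mem_closure (hΩ : Convex ℝ Ω) {x y : Ed d} {s t : ℝ} (hs : 0 < s)
    (ht : 0 < t) (ha : x + s • (x - y) ∈ closure Ω) (hb : y + t • (y - x) ∈ closure Ω) :
    y ∈ face Ω x := by
  refine mem_insert_of_mem _ ⟨_, _, hΩ.closure.segment_subset ha hb,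
    mem_openSegment_add_smul_sub hs ht, ?_⟩
  rw [openSegment_symm]
  exact mem_openSegment_add_smul_sub ht hs

end Hilbert

theorem limit_mem_face_general {d : ℕ} (Ω : Set (Ed d)) (hΩ : IsProperlyConvex Ω)
    (xs ys : ℕ → Ed d) (hxs : ∀ n, xs n ∈ Ω) (hys : ∀ n, ys n ∈ Ω)
    (x y : Ed d)
    (hxlim : Tendsto xs atTop (nhds x)) (hylim : Tendsto ys atTop (nhds y))
    (hbdd : ∃ M : ℝ, ∀ n, hilbertDist Ω (xs n) (ys n) ≤ M) :
    y ∈ face Ω x := by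
  obtain ⟨hΩo, hΩc, hΩb, -⟩ := hΩ
  obtain ⟨M, hM⟩ := hbdd
  rcases eq_or_ne x y with rfl | hxy
  · exact mem_insert x _
  have hr : 0 < ‖x - y‖ / 2 := half_pos (norm_sub_pos_iff.2 hxy)
  have hsep : ∀ᶠ n in atTop, ‖x - y‖ / 2 ≤ ‖xs n - ys n‖ :=
    (hxlim.sub hylim).norm.eventually (Ici_mem_nhds (half_lt_self (norm_sub_pos_iff.2 hxy)))
  set K := Icc (Real.exp (-M)) (Metric.diam Ω / (‖x - y‖ / 2))
  have hK : ∀ᶠ n in atTop, (exitTime Ω (xs n) (ys n), exitTime Ω (ys n) (xs n)) ∈ K ×ˢ K :=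
    hsep.mono fun n hn => exitTime_mem_Icc hΩo hΩb (hxs n) (hys n) hr hn (hM n)
  obtain ⟨⟨s, t⟩, ⟨hs, ht⟩, φ, hφ, hst⟩ :=
    (isCompact_Icc.prod isCompact_Icc).tendsto_subseq' hK.frequently
  have hφ' := hφ.tendsto_atTop
  have hne : ∀ᶠ n in atTop, xs n ≠ ys n :=
    hsep.mono fun n hn heq => by rw [heq, sub_self, norm_zero] at hn; linarith
  replace hne := hφ'.eventually hne
  exact mem_face_of_add_smul_mem_closure hΩc ((Real.exp_pos _).trans_le hs.1)
    ((Real.exp_pos _).trans_le ht.1)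
    (add_smul_mem_closure_of_tendsto hΩb (fun n => hxs (φ n)) hne (hxlim.comp hφ')
      (hylim.comp hφ') hst.fst_nhds)
    (add_smul_mem_closure_of_tendsto hΩb (fun n => hys (φ n)) (hne.mono fun _ => Ne.symm)
      (hylim.comp hφ') (hxlim.comp hφ') hst.snd_nhds)

/-- If sequences `xₙ, yₙ` in `Ω` converge to `x, y` in the closure of `Ω` and the
Hilbert distances `d_Ω(xₙ, yₙ)` are uniformly bounded, then `y` lies in the face of `x`. -/
theorem limit_mem_face {d : ℕ} (Ω : Set (Ed d)) (hΩ : IsProperlyConvex Ω)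
    (xs ys : ℕ → Ed d) (hxs : ∀ n, xs n ∈ Ω) (hys : ∀ n, ys n ∈ Ω)
    (x y : Ed d) (hx : x ∈ closure Ω) (hy : y ∈ closure Ω)
    (hxlim : Tendsto xs atTop (nhds x)) (hylim : Tendsto ys atTop (nhds y))
    (hbdd : ∃ M : ℝ, ∀ n, hilbertDist Ω (xs n) (ys n) ≤ M) :
    y ∈ face Ω x :=
  limit_mem_face_general Ω hΩ xs ys hxs hys x y hxlim hylim hbdd
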